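/- Fix integers n ≥ 1 and 0 < v_1 < v_2 < ⋯ < v_n < v_{n+1} = N. Let d be an aligned degree vector such that the top block d^n = (d^n_1, …, d^n_{v_n}) is not identically zero. Then for every 0 ≤ k ≤ n − 1, Σ_{i=n−k}^{n} ( T_i(d) − R_i(d) ) < − Σ_{j=1}^{v_{n−k}} d^{n−k}_j. -/

import Mathlib

/-!
Write `T_i - R_i` as `∑_j (∑_k B(d^i_j - d^i_k) - ∑_{r ≤ v_{i+1}} B(d^i_j - d^{i+1}_r))`. Matching
the `k`-th term with the `f_i(k)`-th one (monotonicity of `B`), the diagonal `k = j` contributes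
`B(0) = 0` against `B(d^i_j - d^{i+1}_{f_i j}) ≥ d^i_j - d^{i+1}_{f_i j}`, so the `j`-th summand is
at most `d^{i+1}_{f_i j} - d^i_j`. Hence `T_i - R_i ≤ ∑_r d^{i+1}_r - ∑_j d^i_j`, and these bounds
telescope. For `i = n` we have `d^{n+1} = 0`, and an index `r ≤ v_{n+1}` missed by `f_n` (there is
one since `v_n < v_{n+1}`) adds `-∑_j B(d^n_j) < 0`, which makes the bound strict.
-/

open Finset

/-- `Bb m = m(m+1)/2` for `m ≥ 0` and `Bb m = 0` for `m < 0`. -/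
def Bb (m : ℤ) : ℤ := if 0 ≤ m then m * (m + 1) / 2 else 0

/-- `T_i(d) = Σ_{1≤j,k≤v_i} B(d^i_j − d^i_k) − Σ_{1≤j≤v_i} Σ_{1≤r≤v_i} B(d^i_j − d^{i+1}_r)`. -/
def Tt (v : ℕ → ℕ) (d : ℕ → ℕ → ℕ) (i : ℕ) : ℤ :=
  (∑ j ∈ Icc 1 (v i), ∑ k ∈ Icc 1 (v i), Bb ((d i j : ℤ) - (d i k : ℤ)))
    - ∑ j ∈ Icc 1 (v i), ∑ r ∈ Icc 1 (v i), Bb ((d i j : ℤ) - (d (i + 1) r : ℤ))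

/-- `R_i(d) = Σ_{1≤j≤v_i} Σ_{v_i < r ≤ v_{i+1}} B(d^i_j − d^{i+1}_r)`. -/
def Rr (v : ℕ → ℕ) (d : ℕ → ℕ → ℕ) (i : ℕ) : ℤ :=
  ∑ j ∈ Icc 1 (v i), ∑ r ∈ Icc (v i + 1) (v (i + 1)), Bb ((d i j : ℤ) - (d (i + 1) r : ℤ))

/-- A degree vector `d` is aligned if for every `1 ≤ i ≤ n` there is an injection
`f_i : {1,…,v_i} → {1,…,v_{i+1}}` with `d^i_j ≥ d^{i+1}_{f_i(j)}` for all `j`. -/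
def Aligned (n : ℕ) (v : ℕ → ℕ) (d : ℕ → ℕ → ℕ) : Prop :=
  ∀ i, 1 ≤ i → i ≤ n → ∃ f : ℕ → ℕ,
    Set.InjOn f (Set.Icc 1 (v i)) ∧
    ∀ j, 1 ≤ j → j ≤ v i → 1 ≤ f j ∧ f j ≤ v (i + 1) ∧ d (i + 1) (f j) ≤ d i j

lemma Bb_nonneg (m : ℤ) : 0 ≤ Bb m := by
  unfold Bb
  split_ifs with h
  · exact Int.ediv_nonneg (by nlinarith) (by norm_num)
  · rfl

@[simp]
lemma Bb_zero : Bb 0 = 0 := by norm_num [Bb]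

lemma monotone_Bb : Monotone Bb := by
  intro m m' h
  unfold Bb
  split_ifs with h1 h2 h2
  · exact Int.ediv_le_ediv (by norm_num) (by nlinarith)
  · omega
  · exact Int.ediv_nonneg (by nlinarith) (by norm_num)
  · rfl

lemma le_Bb (m : ℤ) : m ≤ Bb m := by
  unfold Bb
  split_ifs with h
  · rw [Int.le_ediv_iff_mul_le (by norm_num)]
    obtain rfl | h1 := h.eq_or_lt
    · norm_num
    · nlinarith
  · omega

section Block

variable {ι κ : Type*} {s : Finset ι} {t : Finset κ} {a : ι → ℤ} {b : κ → ℤ}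
  {f : ι → κ}

lemma sum_Bb_sub_add_le (hf : ∀ k ∈ s, b (f k) ≤ a k) {j : ι} (hj : j ∈ s) :
    ∑ k ∈ s, Bb (a j - a k) + (a j - b (f j)) ≤ ∑ k ∈ s, Bb (a j - b (f k)) := by
  classical
  rw [← add_sum_erase s _ hj, ← add_sum_erase s _ hj, sub_self, Bb_zero, zero_add]
  have hrest : ∑ k ∈ s.erase j, Bb (a j - a k) ≤ ∑ k ∈ s.erase j, Bb (a j - b (f k)) :=
    sum_le_sum fun k hk => monotone_Bb (by linarith [hf k (mem_of_mem_erase hk)])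
  linarith [le_Bb (a j - b (f j))]

lemma sum_Bb_sub_sub_sum_Bb_sub_le [DecidableEq κ] (hinj : Set.InjOn f s)
    (hmaps : Set.MapsTo f s t) (hf : ∀ k ∈ s, b (f k) ≤ a k) {j : ι} (hj : j ∈ s) :
    ∑ k ∈ s, Bb (a j - a k) - ∑ r ∈ t, Bb (a j - b r)
      ≤ b (f j) - a j - ∑ r ∈ t \ s.image f, Bb (a j - b r) := by
  rw [← sum_sdiff (image_subset_iff.2 hmaps), sum_image hinj]
  linarith [sum_Bb_sub_add_le hf hj]

lemma sum_sum_Bb_sub_sub_sum_Bb_sub_le [DecidableEq κ] (hinj : Set.InjOn f s)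
    (hmaps : Set.MapsTo f s t) (hf : ∀ k ∈ s, b (f k) ≤ a k) (hb : ∀ r ∈ t, 0 ≤ b r) :
    ∑ j ∈ s, (∑ k ∈ s, Bb (a j - a k) - ∑ r ∈ t, Bb (a j - b r))
      ≤ ∑ r ∈ t, b r - ∑ j ∈ s, a j - ∑ j ∈ s, ∑ r ∈ t \ s.image f, Bb (a j - b r) := by
  have himage : ∑ j ∈ s, b (f j) ≤ ∑ r ∈ t, b r := by
    rw [← sum_image hinj]
    exact sum_le_sum_of_subset_of_nonneg (image_subset_iff.2 hmaps) fun r hr _ => hb r hr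
  calc _ ≤ ∑ j ∈ s, (b (f j) - a j - ∑ r ∈ t \ s.image f, Bb (a j - b r)) :=
        sum_le_sum fun j hj => sum_Bb_sub_sub_sum_Bb_sub_le hinj hmaps hf hj
    _ ≤ _ := by simp only [sum_sub_distrib]; linarith

end Block

lemma sum_Icc_one_add_sum_Icc_succ (g : ℕ → ℤ) {m M : ℕ} (h : m ≤ M) :
    ∑ r ∈ Icc 1 m, g r + ∑ r ∈ Icc (m + 1) M, g r = ∑ r ∈ Icc 1 M, g r := by
  simp only [Icc_add_one_left_eq_Ioc]
  exact sum_Ioc_consecutive g (Nat.zero_le m) h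

section Degree

variable {v : ℕ → ℕ} {d : ℕ → ℕ → ℕ} {i : ℕ}

lemma Tt_sub_Rr_eq (hv : v i ≤ v (i + 1)) :
    Tt v d i - Rr v d i
      = ∑ j ∈ Icc 1 (v i), (∑ k ∈ Icc 1 (v i), Bb ((d i j : ℤ) - d i k)
          - ∑ r ∈ Icc 1 (v (i + 1)), Bb ((d i j : ℤ) - d (i + 1) r)) := by
  simp only [Tt, Rr, sum_sub_distrib, ← sum_Icc_one_add_sum_Icc_succ _ hv, sum_add_distrib]
  ring

lemma Tt_sub_Rr_le_of_injOn (hv : v i ≤ v (i + 1)) {f : ℕ → ℕ}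
    (hinj : Set.InjOn f (Set.Icc 1 (v i)))
    (hf : ∀ j, 1 ≤ j → j ≤ v i → 1 ≤ f j ∧ f j ≤ v (i + 1) ∧ d (i + 1) (f j) ≤ d i j) :
    Tt v d i - Rr v d i
      ≤ ∑ r ∈ Icc 1 (v (i + 1)), (d (i + 1) r : ℤ) - ∑ j ∈ Icc 1 (v i), (d i j : ℤ)
        - ∑ j ∈ Icc 1 (v i), ∑ r ∈ Icc 1 (v (i + 1)) \ (Icc 1 (v i)).image f,
            Bb ((d i j : ℤ) - d (i + 1) r) := by
  rw [Tt_sub_Rr_eq hv]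
  refine sum_sum_Bb_sub_sub_sum_Bb_sub_le (by simpa using hinj) (fun j hj => ?_)
    (fun j hj => ?_) (fun r _ => by positivity)
  · obtain ⟨hj1, hj2⟩ := mem_Icc.1 (mem_coe.1 hj)
    exact mem_Icc.2 ⟨(hf j hj1 hj2).1, (hf j hj1 hj2).2.1⟩
  · obtain ⟨hj1, hj2⟩ := mem_Icc.1 hj
    exact_mod_cast (hf j hj1 hj2).2.2

lemma Aligned.Tt_sub_Rr_le {n : ℕ} (h : Aligned n v d) (hi : 1 ≤ i) (hin : i ≤ n)
    (hv : v i ≤ v (i + 1)) :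
    Tt v d i - Rr v d i
      ≤ ∑ r ∈ Icc 1 (v (i + 1)), (d (i + 1) r : ℤ) - ∑ j ∈ Icc 1 (v i), (d i j : ℤ) := by
  obtain ⟨f, hinj, hf⟩ := h i hi hin
  have hextra : 0 ≤ ∑ j ∈ Icc 1 (v i), ∑ r ∈ Icc 1 (v (i + 1)) \ (Icc 1 (v i)).image f,
      Bb ((d i j : ℤ) - d (i + 1) r) :=
    sum_nonneg fun _ _ => sum_nonneg fun _ _ => Bb_nonneg _
  linarith [Tt_sub_Rr_le_of_injOn hv hinj hf]

lemma Aligned.Tt_sub_Rr_lt_of_eq_zero {n : ℕ} (h : Aligned n v d) (hi : 1 ≤ i) (hin : i ≤ n)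
    (hv : v i < v (i + 1)) (hnext : ∀ r, d (i + 1) r = 0)
    (hne : ∃ j, 1 ≤ j ∧ j ≤ v i ∧ d i j ≠ 0) :
    Tt v d i - Rr v d i < -∑ j ∈ Icc 1 (v i), (d i j : ℤ) := by
  obtain ⟨f, hinj, hf⟩ := h i hi hin
  obtain ⟨j₀, hj₁, hj₂, hj₀⟩ := hne
  obtain ⟨r₀, hr₀, hr₀f⟩ : ∃ r ∈ Icc 1 (v (i + 1)), r ∉ (Icc 1 (v i)).image f := by
    refine exists_mem_notMem_of_card_lt_card (card_image_le.trans_lt ?_)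
    simpa using hv
  set u := Icc 1 (v (i + 1)) \ (Icc 1 (v i)).image f
  have hextra : 1 ≤ ∑ j ∈ Icc 1 (v i), ∑ r ∈ u, Bb ((d i j : ℤ) - d (i + 1) r) :=
    calc (1 : ℤ) ≤ d i j₀ := by exact_mod_cast Nat.one_le_iff_ne_zero.2 hj₀
      _ ≤ Bb ((d i j₀ : ℤ) - d (i + 1) r₀) := by simpa [hnext] using le_Bb (d i j₀ : ℤ)
      _ ≤ ∑ r ∈ u, Bb ((d i j₀ : ℤ) - d (i + 1) r) :=
          single_le_sum (fun _ _ => Bb_nonneg _) (mem_sdiff.2 ⟨hr₀, hr₀f⟩)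
      _ ≤ _ := single_le_sum (f := fun j => ∑ r ∈ u, Bb ((d i j : ℤ) - d (i + 1) r))
          (fun _ _ => sum_nonneg fun _ _ => Bb_nonneg _) (mem_Icc.2 ⟨hj₁, hj₂⟩)
  have hzero : ∑ r ∈ Icc 1 (v (i + 1)), (d (i + 1) r : ℤ) = 0 := by simp [hnext]
  linarith [Tt_sub_Rr_le_of_injOn hv.le hinj hf]

end Degree

theorem partial_sum_degree_bound_general (n : ℕ) (hn : 1 ≤ n) (v : ℕ → ℕ) (d : ℕ → ℕ → ℕ)
    (hvmono : ∀ i, 1 ≤ i → i ≤ n → v i < v (i + 1))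
    (hdtop : ∀ r, d (n + 1) r = 0)
    (halign : Aligned n v d)
    (hne : ∃ j, 1 ≤ j ∧ j ≤ v n ∧ d n j ≠ 0) :
    ∀ k, k ≤ n - 1 →
      (∑ i ∈ Icc (n - k) n, (Tt v d i - Rr v d i))
        < -(∑ j ∈ Icc 1 (v (n - k)), (d (n - k) j : ℤ)) := by
  intro k hk
  induction k with
  | zero =>
    simpa using halign.Tt_sub_Rr_lt_of_eq_zero hn le_rfl (hvmono n hn le_rfl) hdtop hne
  | succ k ih =>
    have hi : 1 ≤ n - (k + 1) := by omega
    have hin : n - (k + 1) ≤ n := by omega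
    have hsucc : n - (k + 1) + 1 = n - k := by omega
    have hstep := halign.Tt_sub_Rr_le hi hin (hvmono _ hi hin).le
    rw [hsucc] at hstep
    rw [← insert_Icc_add_one_left_eq_Icc hin, hsucc, sum_insert (by simp only [mem_Icc]; omega)]
    linarith [ih (by omega)]

/-- Inductive claim on the partial sums `S_k = Σ_{i=n−k}^{n} (T_i − R_i)`: if `d` is
aligned and the top block `d^n` is not identically zero, then for every
`0 ≤ k ≤ n − 1`, `Σ_{i=n−k}^{n} (T_i(d) − R_i(d)) < − Σ_{j=1}^{v_{n−k}} d^{n−k}_j`. -/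
theorem partial_sum_degree_bound (n : ℕ) (hn : 1 ≤ n) (v : ℕ → ℕ) (d : ℕ → ℕ → ℕ)
    (hv1 : 0 < v 1) (hvmono : ∀ i, 1 ≤ i → i ≤ n → v i < v (i + 1))
    (hdtop : ∀ r, d (n + 1) r = 0)
    (halign : Aligned n v d)
    (hne : ∃ j, 1 ≤ j ∧ j ≤ v n ∧ d n j ≠ 0) :
    ∀ k, k ≤ n - 1 →
      (∑ i ∈ Icc (n - k) n, (Tt v d i - Rr v d i))
        < -(∑ j ∈ Icc 1 (v (n - k)), (d (n - k) j : ℤ)) :=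
  partial_sum_degree_bound_general n hn v d hvmono hdtop halign hne
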